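/- arXiv:1706.08154 — 7 statements merged into one kernel-verified Lean document; each statement's English description precedes it below -/
import Mathlib

section
/- Let ℓ be a prime number and a₁, a₂ ∈ ℤ. Suppose the polynomial x⁴ + a₁x³ + a₂x² + ℓa₁x + ℓ² factors over ℂ as (x − λ₁)(x − conj(λ₁))(x − λ₂)(x − conj(λ₂)), where λ₁, λ₂ ∈ ℂ satisfy |λ₁| = |λ₂| = √ℓ. Set sᵢ = (λᵢ + conj(λᵢ))/√ℓ ∈ ℝ for i = 1, 2. If |s₁ − s₂| < 1/√ℓ, then s₁ = s₂. -/
/-!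
Grouping the roots into conjugate pairs writes the quartic as `(x² - t₁x + ℓ)(x² - t₂x + ℓ)` with
`tᵢ = √ℓ sᵢ`. Comparing coefficients gives `a₁ = -(t₁ + t₂)` and `a₂ = 2ℓ + t₁t₂`, so the integer
`a₁² - 4a₂ + 8ℓ` equals `(t₁ - t₂)² = ℓ(s₁ - s₂)²`. The closeness hypothesis puts this integer in
`[0, 1)`, so it vanishes.
-/

open ComplexConjugate

theorem Complex.sub_mul_sub_conj_of_norm_eq_sqrt {q : ℝ} (hq : 0 ≤ q) {z : ℂ} (hz : ‖z‖ = √q)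
    (x : ℂ) : (x - z) * (x - conj z) = x ^ 2 - (z + conj z) * x + q := by
  have hzz : z * conj z = q := by
    rw [Complex.mul_conj', hz, ← Complex.ofReal_pow, Real.sq_sqrt hq]
  linear_combination hzz

theorem sq_sub_four_mul_add_eight_mul_eq_of_forall_eq {K : Type*} [Field K] [CharZero K]
    {q a₁ a₂ t₁ t₂ : K}
    (h : ∀ x : K, x ^ 4 + a₁ * x ^ 3 + a₂ * x ^ 2 + q * a₁ * x + q ^ 2 =
      (x ^ 2 - t₁ * x + q) * (x ^ 2 - t₂ * x + q)) :
    a₁ ^ 2 - 4 * a₂ + 8 * q = (t₁ - t₂) ^ 2 := by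
  -- The difference of the two sides is `A x (x² + q) + B x²`; the values at `1, -1, 2` kill `A, B`.
  have hB : a₂ = 2 * q + t₁ * t₂ := by
    linear_combination (h 1 + h (-1)) / 2
  have hA : a₁ = -(t₁ + t₂) := by
    linear_combination (h 2 - 3 * h 1 - h (-1)) / 6
  rw [hA, hB]
  ring

theorem sqrt_pos_of_abs_lt_one_div_sqrt {q d : ℝ} (hd : |d| < 1 / √q) : 0 < √q :=
  one_div_pos.mp ((abs_nonneg d).trans_lt hd)

theorem mul_sq_lt_one_of_abs_lt_one_div_sqrt {q d : ℝ} (hd : |d| < 1 / √q) : q * d ^ 2 < 1 := by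
  have hq : 0 < q := Real.sqrt_pos.mp (sqrt_pos_of_abs_lt_one_div_sqrt hd)
  calc q * d ^ 2 = q * |d| ^ 2 := by rw [sq_abs]
    _ < q * (1 / √q) ^ 2 := by gcongr
    _ = 1 := by rw [div_pow, Real.sq_sqrt hq.le]; field_simp

theorem eq_of_intCast_eq_mul_sq_sub {q s₁ s₂ : ℝ} {n : ℤ} (hn : (n : ℝ) = q * (s₁ - s₂) ^ 2)
    (hclose : |s₁ - s₂| < 1 / √q) : s₁ = s₂ := by
  have hq : 0 < q := Real.sqrt_pos.mp (sqrt_pos_of_abs_lt_one_div_sqrt hclose)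
  have hn_lt : n < 1 := by exact_mod_cast hn ▸ mul_sq_lt_one_of_abs_lt_one_div_sqrt hclose
  have hn_nonneg : 0 ≤ n := by exact_mod_cast hn ▸ (by positivity : 0 ≤ q * (s₁ - s₂) ^ 2)
  obtain rfl : n = 0 := by omega
  rw [Int.cast_zero, eq_comm, mul_eq_zero, or_iff_right hq.ne'] at hn
  exact sub_eq_zero.mp (pow_eq_zero_iff two_ne_zero |>.mp hn)

theorem exceptional_splitting_trace_rigidity_general
    (ℓ : ℕ) (a₁ a₂ : ℤ) (lam₁ lam₂ : ℂ)
    (hfact : ∀ x : ℂ,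
      x ^ 4 + (a₁ : ℂ) * x ^ 3 + (a₂ : ℂ) * x ^ 2 + (ℓ : ℂ) * (a₁ : ℂ) * x + (ℓ : ℂ) ^ 2 =
        (x - lam₁) * (x - (starRingEnd ℂ) lam₁) * (x - lam₂) * (x - (starRingEnd ℂ) lam₂))
    (habs₁ : ‖lam₁‖ = Real.sqrt ℓ)
    (habs₂ : ‖lam₂‖ = Real.sqrt ℓ)
    (s₁ s₂ : ℝ)
    (hs₁ : (s₁ : ℂ) = (lam₁ + (starRingEnd ℂ) lam₁) / (Real.sqrt ℓ : ℝ))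
    (hs₂ : (s₂ : ℂ) = (lam₂ + (starRingEnd ℂ) lam₂) / (Real.sqrt ℓ : ℝ))
    (hclose : |s₁ - s₂| < 1 / Real.sqrt ℓ) :
    s₁ = s₂ := by
  have hsqrt : ((√ℓ : ℝ) : ℂ) ≠ 0 :=
    Complex.ofReal_ne_zero.mpr (sqrt_pos_of_abs_lt_one_div_sqrt hclose).ne'
  have htr₁ : lam₁ + conj lam₁ = (√ℓ : ℝ) * s₁ := by rw [hs₁, mul_div_cancel₀ _ hsqrt]
  have htr₂ : lam₂ + conj lam₂ = (√ℓ : ℝ) * s₂ := by rw [hs₂, mul_div_cancel₀ _ hsqrt]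
  have hquad : ∀ x : ℂ,
      x ^ 4 + (a₁ : ℂ) * x ^ 3 + (a₂ : ℂ) * x ^ 2 + (ℓ : ℂ) * (a₁ : ℂ) * x + (ℓ : ℂ) ^ 2 =
        (x ^ 2 - (√ℓ : ℝ) * s₁ * x + ℓ) * (x ^ 2 - (√ℓ : ℝ) * s₂ * x + ℓ) := fun x => by
    have hpair₁ := Complex.sub_mul_sub_conj_of_norm_eq_sqrt ℓ.cast_nonneg habs₁ x
    have hpair₂ := Complex.sub_mul_sub_conj_of_norm_eq_sqrt ℓ.cast_nonneg habs₂ x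
    rw [hfact x, mul_assoc _ (x - lam₂), hpair₁, hpair₂, htr₁, htr₂, Complex.ofReal_natCast]
  have hdisc : ((a₁ ^ 2 - 4 * a₂ + 8 * ℓ : ℤ) : ℝ) = ℓ * (s₁ - s₂) ^ 2 := by
    have h := sq_sub_four_mul_add_eight_mul_eq_of_forall_eq hquad
    have hℓ : ((√ℓ : ℝ) : ℂ) ^ 2 = ℓ := by norm_cast; exact Real.sq_sqrt ℓ.cast_nonneg
    have hC : ((a₁ ^ 2 - 4 * a₂ + 8 * ℓ : ℤ) : ℂ) = ((ℓ * (s₁ - s₂) ^ 2 : ℝ) : ℂ) := by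
      push_cast
      linear_combination h + (↑s₁ - ↑s₂) ^ 2 * hℓ
    exact_mod_cast hC
  exact eq_of_intCast_eq_mul_sq_sub hdisc hclose

/-- **Sato–Tate rigidity for quartic Weil polynomials.**
Let `ℓ` be a prime and `a₁ a₂ : ℤ`. Suppose `x⁴ + a₁x³ + a₂x² + ℓa₁x + ℓ²` factors over `ℂ` as
`(x − lam₁)(x − conj lam₁)(x − lam₂)(x − conj lam₂)` with `|lam₁| = |lam₂| = √ℓ`.
Set `sᵢ = (lamᵢ + conj lamᵢ)/√ℓ ∈ ℝ`. If `|s₁ − s₂| < 1/√ℓ` then `s₁ = s₂`. -/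
theorem exceptional_splitting_trace_rigidity
    (ℓ : ℕ) (hℓ : ℓ.Prime) (a₁ a₂ : ℤ) (lam₁ lam₂ : ℂ)
    (hfact : ∀ x : ℂ,
      x ^ 4 + (a₁ : ℂ) * x ^ 3 + (a₂ : ℂ) * x ^ 2 + (ℓ : ℂ) * (a₁ : ℂ) * x + (ℓ : ℂ) ^ 2 =
        (x - lam₁) * (x - (starRingEnd ℂ) lam₁) * (x - lam₂) * (x - (starRingEnd ℂ) lam₂))
    (habs₁ : ‖lam₁‖ = Real.sqrt ℓ)
    (habs₂ : ‖lam₂‖ = Real.sqrt ℓ)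
    (s₁ s₂ : ℝ)
    (hs₁ : (s₁ : ℂ) = (lam₁ + (starRingEnd ℂ) lam₁) / (Real.sqrt ℓ : ℝ))
    (hs₂ : (s₂ : ℂ) = (lam₂ + (starRingEnd ℂ) lam₂) / (Real.sqrt ℓ : ℝ))
    (hclose : |s₁ - s₂| < 1 / Real.sqrt ℓ) :
    s₁ = s₂ :=
  exceptional_splitting_trace_rigidity_general ℓ a₁ a₂ lam₁ lam₂ hfact habs₁ habs₂ s₁ s₂ hs₁ hs₂
    hclose
end

section
/- Let F be a real quadratic field with discriminant D, and let q be a rational prime that is inert in F, i.e., q·O_F is a prime ideal of the ring of integers O_F of F. Then there is no nonzero ideal 𝔟 of O_F whose absolute norm equals q·D. -/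
/-!
An inert prime is unramified, so by Dedekind's criterion `q ∤ D`. On the other hand `q ∣ N𝔟`
forces `𝔟 ⊆ q·O_F`, the only prime above `q`; hence `𝔟 = q·𝔠`, `N𝔟 = q²·N𝔠` and `q ∣ D`.
-/

open NumberField

namespace Ideal

variable {S : Type*} [CommRing S] [IsDedekindDomain S]

lemma span_natCast_ne_bot [Module.IsTorsionFree ℤ S] {q : ℕ} (hq : q ≠ 0) :
    span {(q : S)} ≠ ⊥ := by
  have : IsAddTorsionFree S := .of_isTorsionFree ℤ _
  have := CharZero.of_isAddTorsionFree S S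
  simpa using hq

lemma isUnramifiedAt_span_natCast_of_isPrime [Module.Finite ℤ S] [Module.IsTorsionFree ℤ S]
    {q : ℕ} (hq : q.Prime) (hinert : (span {(q : S)}).IsPrime) :
    Algebra.IsUnramifiedAt ℤ (span {(q : S)}) := by
  have hmap : (span {(q : ℤ)}).map (algebraMap ℤ S) = span {(q : S)} := by
    simp [map_span]
  have : (span {(q : S)}).LiesOver (span {(q : ℤ)}) :=
    (liesOver_span_iff hinert.ne_top (Nat.prime_iff_prime_int.mp hq)).mpr (by simp)
  rw [← ramificationIdx_eq_one_iff,
    ← ramificationIdx'_eq_ramificationIdx (span {(q : ℤ)}) _ (by simp [hq.ne_zero]), ← hmap]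
  exact ramificationIdx'_map_self_eq_one (hmap ▸ hinert.ne_top)
    (hmap ▸ span_natCast_ne_bot hq.ne_zero)

lemma span_natCast_dvd_of_dvd_absNorm [Module.Free ℤ S] [Module.Finite ℤ S]
    {q : ℕ} (hq : q.Prime) (hinert : (span {(q : S)}).IsPrime) {I : Ideal S}
    (hI : q ∣ absNorm I) : span {(q : S)} ∣ I := by
  obtain ⟨P, hPmax, hPq, hPI⟩ := exists_isMaximal_dvd_of_dvd_absNorm' hq I hI
  have hqP : (q : ℤ) ∈ P.under ℤ := hPq ▸ mem_span_singleton_self _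
  have hle : span {(q : S)} ≤ P := by
    simpa [span_singleton_le_iff_mem] using hqP
  rwa [(hinert.isMaximal (span_natCast_ne_bot hq.ne_zero)).eq_of_le hPmax.ne_top hle]

end Ideal

lemma NumberField.not_dvd_discr_of_isPrime_span (K : Type*) [Field K] [NumberField K]
    {q : ℕ} (hq : q.Prime) (hinert : (Ideal.span {(q : 𝓞 K)}).IsPrime) :
    ¬ (q : ℤ) ∣ discr K := by
  rw [not_dvd_discr_iff_forall_mem K (𝓞 K) (Nat.prime_iff_prime_int.mp hq)]
  intro P hP hqP
  obtain rfl : Ideal.span {(q : 𝓞 K)} = P :=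
    (hinert.isMaximal (Ideal.span_natCast_ne_bot hq.ne_zero)).eq_of_le hP.ne_top
      (by simpa [Ideal.span_singleton_le_iff_mem] using hqP)
  exact Ideal.isUnramifiedAt_span_natCast_of_isPrime hq hinert

theorem no_ideal_of_norm_qD_general
    (F : Type*) [Field F] [NumberField F]
    (hdeg : Module.finrank ℚ F = 2)
    (q : ℕ) (hq : q.Prime)
    (hinert : (Ideal.span {(q : 𝓞 F)} : Ideal (𝓞 F)).IsPrime) :
    ¬ ∃ 𝔟 : Ideal (𝓞 F), 𝔟 ≠ ⊥ ∧ (Ideal.absNorm 𝔟 : ℤ) = (q : ℤ) * NumberField.discr F := by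
  rintro ⟨𝔟, -, hnorm⟩
  have hq𝔟 : q ∣ Ideal.absNorm 𝔟 := by
    rw [← Int.natCast_dvd_natCast, hnorm]
    exact dvd_mul_right _ _
  obtain ⟨𝔠, rfl⟩ := Ideal.span_natCast_dvd_of_dvd_absNorm hq hinert hq𝔟
  have hnorm_q : Ideal.absNorm (Ideal.span {(q : 𝓞 F)}) = q ^ 2 := by
    rw [Ideal.absNorm_span_natCast, RingOfIntegers.rank, hdeg]
  rw [map_mul, hnorm_q] at hnorm
  have hD : discr F = q * Ideal.absNorm 𝔠 := by
    apply mul_left_cancel₀ (Int.natCast_ne_zero.mpr hq.ne_zero)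
    rw [← hnorm]
    push_cast
    ring
  exact not_dvd_discr_of_isPrime_span F hq hinert ⟨_, hD⟩

/-- **No ideal of norm `q·D` in a real quadratic field when `q` is inert.**
Let `F` be a real quadratic field with discriminant `D`, and let `q` be a rational prime
which is inert in `F` (i.e. `q·O_F` is a prime ideal).  Then there is no nonzero ideal of
`O_F` of absolute norm `q·D`. -/
theorem no_ideal_of_norm_qD
    (F : Type*) [Field F] [NumberField F]
    (hdeg : Module.finrank ℚ F = 2)
    (hreal : Nonempty (F →+* ℝ))
    (q : ℕ) (hq : q.Prime)
    (hinert : (Ideal.span {(q : 𝓞 F)} : Ideal (𝓞 F)).IsPrime) :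
    ¬ ∃ 𝔟 : Ideal (𝓞 F), 𝔟 ≠ ⊥ ∧ (Ideal.absNorm 𝔟 : ℤ) = (q : ℤ) * NumberField.discr F :=
  no_ideal_of_norm_qD_general F hdeg q hq hinert
end

section
/- Let C₀ ≥ 1 and λ > 0 be real numbers, and let u = (u₁₁, u₁₂; u₂₁, u₂₂) be a real 2×2 matrix with determinant λ. Let z ∈ ℂ with Im z > 0, |Re z| ≤ C₀ and C₀⁻¹ ≤ Im z ≤ C₀, and suppose u₂₁z + u₂₂ ≠ 0 and the point w = (u₁₁z + u₁₂)/(u₂₁z + u₂₂) satisfies |Re w| ≤ C₀ and C₀⁻¹ ≤ Im w ≤ C₀. Then |u₁₁|, |u₁₂|, |u₂₁|, |u₂₂| are all at most 4C₀⁴√λ. -/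
/-!
The imaginary part transforms as `Im w = det u · Im z / |u₂₁z + u₂₂|²`, so the box constraints on
`Im z` and `Im w` give `|u₂₁z + u₂₂| ≤ C₀ √λ`, and then
`|u₁₁z + u₁₂| = |w| |u₂₁z + u₂₂| ≤ 2C₀² √λ`. Because `Im z ≥ C₀⁻¹` and `|Re z| ≤ C₀`, the real
coefficients `c, d` of a linear form `cz + d` are at most `2C₀²` times its modulus.
-/

open Complex

theorem im_linear_div_linear (a b c d : ℝ) (z : ℂ) :
    ((a * z + b) / (c * z + d)).im = (a * d - b * c) * z.im / normSq (c * z + d) := by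
  simp only [div_im, add_re, add_im, mul_re, mul_im, ofReal_re, ofReal_im]
  ring

theorem norm_linear_le_of_inv_le_im_div (a b c d : ℝ) {z : ℂ} {C : ℝ} (hC : 0 < C)
    (hy : 0 < z.im) (hyC : z.im ≤ C) (hw : C⁻¹ ≤ ((a * z + b) / (c * z + d)).im) :
    ‖(c : ℂ) * z + d‖ ≤ C * √(a * d - b * c) := by
  rw [im_linear_div_linear] at hw
  set N := normSq (c * z + d)
  have hw_pos : 0 < (a * d - b * c) * z.im / N := (inv_pos.2 hC).trans_le hw
  have hN : 0 < N := by
    refine (normSq_nonneg _).lt_of_ne fun h ↦ ?_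
    rw [show N = 0 from h.symm, div_zero] at hw_pos
    exact hw_pos.false
  have hdet : 0 < a * d - b * c :=
    pos_of_mul_pos_left ((div_pos_iff_of_pos_right hN).1 hw_pos) hy.le
  have hNle : N ≤ (a * d - b * c) * C ^ 2 := by
    rw [le_div_iff₀ hN] at hw
    calc N = C * (C⁻¹ * N) := by field_simp
      _ ≤ C * ((a * d - b * c) * z.im) := by gcongr
      _ ≤ C * ((a * d - b * c) * C) := by gcongr
      _ = (a * d - b * c) * C ^ 2 := by ring
  rw [← sq_le_sq₀ (norm_nonneg _) (by positivity), mul_pow, Real.sq_sqrt hdet.le,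
    Complex.sq_norm]
  linarith

theorem abs_mul_im_le_norm_linear (c d : ℝ) (z : ℂ) : |c| * z.im ≤ ‖(c : ℂ) * z + d‖ :=
  calc |c| * z.im ≤ |c| * |z.im| := by gcongr; exact le_abs_self _
    _ = |((c : ℂ) * z + d).im| := by simp [abs_mul]
    _ ≤ ‖(c : ℂ) * z + d‖ := abs_im_le_norm _

theorem abs_le_norm_linear_add (c d : ℝ) (z : ℂ) :
    |d| ≤ ‖(c : ℂ) * z + d‖ + |c| * |z.re| :=
  calc |d| = |((c : ℂ) * z + d).re - c * z.re| := by simp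
    _ ≤ |((c : ℂ) * z + d).re| + |c * z.re| := abs_sub _ _
    _ ≤ ‖(c : ℂ) * z + d‖ + |c| * |z.re| := by rw [abs_mul]; gcongr; exact abs_re_le_norm _

theorem abs_coeffs_le_of_norm_linear_le {c d : ℝ} {z : ℂ} {C M : ℝ} (hC : 1 ≤ C)
    (hre : |z.re| ≤ C) (him : C⁻¹ ≤ z.im) (h : ‖(c : ℂ) * z + d‖ ≤ M) :
    |c| ≤ 2 * C ^ 2 * M ∧ |d| ≤ 2 * C ^ 2 * M := by
  have hC₀ : 0 < C := by linarith
  have hM : 0 ≤ M := (norm_nonneg _).trans h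
  have hc : |c| ≤ C * M :=
    calc |c| = C * (|c| * C⁻¹) := by field_simp
      _ ≤ C * (|c| * z.im) := by gcongr
      _ ≤ C * M := by gcongr; exact (abs_mul_im_le_norm_linear c d z).trans h
  have hC2 : 1 ≤ C ^ 2 := one_le_pow₀ hC
  have hCM : C * M ≤ 2 * C ^ 2 * M := by nlinarith [mul_nonneg (sub_nonneg.2 hC) hM]
  refine ⟨hc.trans hCM, ?_⟩
  calc |d| ≤ M + C * M * C := by
        grw [abs_le_norm_linear_add c d z, h, hc, hre]
    _ ≤ 2 * C ^ 2 * M := by nlinarith [mul_nonneg (sub_nonneg.2 hC2) hM]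

theorem mobius_entry_bound_general
    (C₀ lam : ℝ) (hC₀ : 1 ≤ C₀)
    (u : Matrix (Fin 2) (Fin 2) ℝ) (hdet : u.det = lam)
    (z : ℂ)
    (hz_re : |z.re| ≤ C₀) (hz_lb : C₀⁻¹ ≤ z.im) (hz_ub : z.im ≤ C₀)
    (w : ℂ)
    (hw : w = ((u 0 0 : ℂ) * z + (u 0 1 : ℂ)) / ((u 1 0 : ℂ) * z + (u 1 1 : ℂ)))
    (hw_re : |w.re| ≤ C₀) (hw_lb : C₀⁻¹ ≤ w.im) (hw_ub : w.im ≤ C₀) :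
    ∀ i j : Fin 2, |u i j| ≤ 4 * C₀ ^ 4 * Real.sqrt lam := by
  have hC₀_pos : 0 < C₀ := by linarith
  have hw_pos : 0 < w.im := (inv_pos.2 hC₀_pos).trans_le hw_lb
  rw [Matrix.det_fin_two] at hdet
  have hden : ‖(u 1 0 : ℂ) * z + u 1 1‖ ≤ C₀ * √lam := hdet ▸
    norm_linear_le_of_inv_le_im_div _ _ _ _ hC₀_pos ((inv_pos.2 hC₀_pos).trans_le hz_lb) hz_ub
      (hw ▸ hw_lb)
  have hden_ne : (u 1 0 : ℂ) * z + u 1 1 ≠ 0 := fun h ↦ by simp [hw, h] at hw_pos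
  have hnum : ‖(u 0 0 : ℂ) * z + u 0 1‖ ≤ 2 * C₀ ^ 2 * √lam :=
    calc ‖(u 0 0 : ℂ) * z + u 0 1‖ = ‖w‖ * ‖(u 1 0 : ℂ) * z + u 1 1‖ := by
          rw [hw, ← norm_mul, div_mul_cancel₀ _ hden_ne]
      _ ≤ (2 * C₀) * (C₀ * √lam) := by
          gcongr
          linarith [norm_le_abs_re_add_abs_im w, abs_of_pos hw_pos]
      _ = 2 * C₀ ^ 2 * √lam := by ring
  have hden' : ‖(u 1 0 : ℂ) * z + u 1 1‖ ≤ 2 * C₀ ^ 2 * √lam := hden.trans (by gcongr; nlinarith)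
  obtain ⟨h00, h01⟩ := abs_coeffs_le_of_norm_linear_le hC₀ hz_re hz_lb hnum
  obtain ⟨h10, h11⟩ := abs_coeffs_le_of_norm_linear_le hC₀ hz_re hz_lb hden'
  have hconst : 2 * C₀ ^ 2 * (2 * C₀ ^ 2 * √lam) = 4 * C₀ ^ 4 * √lam := by ring
  rw [hconst] at h00 h01 h10 h11
  simp only [Fin.forall_fin_two]
  exact ⟨⟨h00, h01⟩, h10, h11⟩

/-- **Entry bounds for a Möbius transformation preserving a compact box of `ℍ`.**
Let `C₀ ≥ 1`, `lam > 0`, and let `u` be a real `2×2` matrix of determinant `lam`.  If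
`z ∈ ℍ` lies in the box `|Re z| ≤ C₀`, `C₀⁻¹ ≤ Im z ≤ C₀` and its image
`w = (u₁₁z + u₁₂)/(u₂₁z + u₂₂)` lies in the same box, then all entries of `u` are
bounded by `4C₀⁴√lam`. -/
theorem mobius_entry_bound
    (C₀ lam : ℝ) (hC₀ : 1 ≤ C₀) (hlam : 0 < lam)
    (u : Matrix (Fin 2) (Fin 2) ℝ) (hdet : u.det = lam)
    (z : ℂ) (hz_im : 0 < z.im)
    (hz_re : |z.re| ≤ C₀) (hz_lb : C₀⁻¹ ≤ z.im) (hz_ub : z.im ≤ C₀)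
    (hden : (u 1 0 : ℂ) * z + (u 1 1 : ℂ) ≠ 0)
    (w : ℂ)
    (hw : w = ((u 0 0 : ℂ) * z + (u 0 1 : ℂ)) / ((u 1 0 : ℂ) * z + (u 1 1 : ℂ)))
    (hw_re : |w.re| ≤ C₀) (hw_lb : C₀⁻¹ ≤ w.im) (hw_ub : w.im ≤ C₀) :
    ∀ i j : Fin 2, |u i j| ≤ 4 * C₀ ^ 4 * Real.sqrt lam :=
  mobius_entry_bound_general C₀ lam hC₀ u hdet z hz_re hz_lb hz_ub w hw hw_re hw_lb hw_ub
end

section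
/- Let F be a real quadratic field with real embeddings σ₁, σ₂ and ring of integers O_F. Let A, B ≥ 1 be real numbers and let α₁, α₂, Δ₁, Δ₂ ∈ O_F be totally positive elements satisfying |σⱼ(αᵢ)| ≤ A and |σⱼ(Δᵢ)| ≤ B for all i, j ∈ {1, 2}. If α₂²Δ₁ ≠ α₁²Δ₂, then |√(σ₁(Δ₁))/(2σ₁(α₁)) − √(σ₁(Δ₂))/(2σ₁(α₂))| ≥ 1/(8A⁵B^{3/2}). -/
/-!
Put `γ = α₂²Δ₁ − α₁²Δ₂`, a nonzero algebraic integer, so `|σ₁(γ) σ₂(γ)| = |N(γ)| ≥ 1`.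
The conjugate is small, `|σ₂(γ)| ≤ 2A²B`, while rationalising gives
`σ₁(γ) = 2a₁a₂(a₂√d₁ + a₁√d₂) · (√d₁/(2a₁) − √d₂/(2a₂))` with `aᵢ = σ₁(αᵢ)`, `dᵢ = σ₁(Δᵢ)`,
whose first factor is at most `4A³√B`. Hence `1 ≤ 8A⁵B^{3/2}` times the difference.
-/

open NumberField

theorem Algebra.norm_eq_mul_of_finrank_eq_two {F : Type*} [Field F] [NumberField F]
    (hdeg : Module.finrank ℚ F = 2) {σ₁ σ₂ : F →+* ℝ} (hσ : σ₁ ≠ σ₂) (x : F) :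
    (Algebra.norm ℚ x : ℝ) = σ₁ x * σ₂ x := by
  classical
  let τ₁ : F →+* ℂ := Complex.ofRealHom.comp σ₁
  let τ₂ : F →+* ℂ := Complex.ofRealHom.comp σ₂
  have hτ : τ₁ ≠ τ₂ := fun h ↦ hσ <| RingHom.ext fun y ↦ by
    simpa [τ₁, τ₂] using RingHom.congr_fun h y
  have huniv : (Finset.univ : Finset (F →+* ℂ)) = {τ₁, τ₂} := by
    refine (Finset.eq_univ_of_card _ ?_).symm
    rw [Finset.card_pair hτ, NumberField.Embeddings.card F ℂ, hdeg]
  have hprod : algebraMap ℚ ℂ (Algebra.norm ℚ x) = τ₁ x * τ₂ x := by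
    rw [Algebra.norm_eq_prod_embeddings,
      ← Fintype.prod_equiv (RingHom.equivRatAlgHom F ℂ) _ (fun ψ ↦ ψ x) fun _ ↦ rfl, huniv,
      Finset.prod_pair hτ]
    rfl
  have hC : ((Algebra.norm ℚ x : ℝ) : ℂ) = ((σ₁ x * σ₂ x : ℝ) : ℂ) := by
    simpa [τ₁, τ₂] using hprod
  exact_mod_cast hC

theorem NumberField.RingOfIntegers.one_le_abs_norm {F : Type*} [Field F] [NumberField F]
    {x : 𝓞 F} (hx : x ≠ 0) : (1 : ℝ) ≤ |(Algebra.norm ℚ (x : F) : ℝ)| := by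
  rw [← Algebra.coe_norm_int]
  exact_mod_cast Int.one_le_abs (Algebra.norm_ne_zero_iff.mpr hx)

theorem sq_mul_sub_sq_mul_eq {a₁ a₂ d₁ d₂ : ℝ} (ha₁ : a₁ ≠ 0) (ha₂ : a₂ ≠ 0)
    (hd₁ : 0 ≤ d₁) (hd₂ : 0 ≤ d₂) :
    a₂ ^ 2 * d₁ - a₁ ^ 2 * d₂ =
      2 * a₁ * a₂ * (a₂ * √d₁ + a₁ * √d₂) * (√d₁ / (2 * a₁) - √d₂ / (2 * a₂)) := by
  conv_lhs => rw [← Real.sq_sqrt hd₁, ← Real.sq_sqrt hd₂]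
  field_simp
  ring

theorem abs_sq_mul_sub_sq_mul_le {a₁ a₂ d₁ d₂ A B : ℝ} (ha₁ : |a₁| ≤ A) (ha₂ : |a₂| ≤ A)
    (hd₁ : |d₁| ≤ B) (hd₂ : |d₂| ≤ B) : |a₂ ^ 2 * d₁ - a₁ ^ 2 * d₂| ≤ 2 * A ^ 2 * B := by
  calc |a₂ ^ 2 * d₁ - a₁ ^ 2 * d₂| ≤ |a₂ ^ 2 * d₁| + |a₁ ^ 2 * d₂| := abs_sub _ _
    _ = |a₂| ^ 2 * |d₁| + |a₁| ^ 2 * |d₂| := by rw [abs_mul, abs_mul, abs_pow, abs_pow]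
    _ ≤ A ^ 2 * B + A ^ 2 * B := by gcongr
    _ = 2 * A ^ 2 * B := by ring

theorem abs_sq_mul_sub_sq_mul_le_mul_abs_sub {a₁ a₂ d₁ d₂ A B : ℝ}
    (ha₁ : 0 < a₁) (ha₂ : 0 < a₂) (ha₁A : a₁ ≤ A) (ha₂A : a₂ ≤ A)
    (hd₁ : 0 ≤ d₁) (hd₂ : 0 ≤ d₂) (hd₁B : d₁ ≤ B) (hd₂B : d₂ ≤ B) :
    |a₂ ^ 2 * d₁ - a₁ ^ 2 * d₂| ≤
      4 * A ^ 3 * √B * |√d₁ / (2 * a₁) - √d₂ / (2 * a₂)| := by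
  rw [sq_mul_sub_sq_mul_eq ha₁.ne' ha₂.ne' hd₁ hd₂, abs_mul, abs_of_nonneg (by positivity)]
  refine mul_le_mul_of_nonneg_right ?_ (abs_nonneg _)
  have hA : 0 ≤ A := ha₁.le.trans ha₁A
  calc 2 * a₁ * a₂ * (a₂ * √d₁ + a₁ * √d₂) ≤ 2 * A * A * (A * √B + A * √B) := by gcongr
    _ = 4 * A ^ 3 * √B := by ring

theorem cm_point_separation_general
    (F : Type*) [Field F] [NumberField F]
    (hdeg : Module.finrank ℚ F = 2)
    (σ₁ σ₂ : F →+* ℝ) (hσ : σ₁ ≠ σ₂)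
    (A B : ℝ)
    (α₁ α₂ Δ₁ Δ₂ : 𝓞 F)
    (hα₁pos : 0 < σ₁ (algebraMap (𝓞 F) F α₁) ∧ 0 < σ₂ (algebraMap (𝓞 F) F α₁))
    (hα₂pos : 0 < σ₁ (algebraMap (𝓞 F) F α₂) ∧ 0 < σ₂ (algebraMap (𝓞 F) F α₂))
    (hΔ₁pos : 0 < σ₁ (algebraMap (𝓞 F) F Δ₁) ∧ 0 < σ₂ (algebraMap (𝓞 F) F Δ₁))
    (hΔ₂pos : 0 < σ₁ (algebraMap (𝓞 F) F Δ₂) ∧ 0 < σ₂ (algebraMap (𝓞 F) F Δ₂))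
    (hα₁bd : |σ₁ (algebraMap (𝓞 F) F α₁)| ≤ A ∧ |σ₂ (algebraMap (𝓞 F) F α₁)| ≤ A)
    (hα₂bd : |σ₁ (algebraMap (𝓞 F) F α₂)| ≤ A ∧ |σ₂ (algebraMap (𝓞 F) F α₂)| ≤ A)
    (hΔ₁bd : |σ₁ (algebraMap (𝓞 F) F Δ₁)| ≤ B ∧ |σ₂ (algebraMap (𝓞 F) F Δ₁)| ≤ B)
    (hΔ₂bd : |σ₁ (algebraMap (𝓞 F) F Δ₂)| ≤ B ∧ |σ₂ (algebraMap (𝓞 F) F Δ₂)| ≤ B)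
    (hne : α₂ ^ 2 * Δ₁ ≠ α₁ ^ 2 * Δ₂) :
    1 / (8 * A ^ 5 * B ^ ((3 : ℝ) / 2)) ≤
      |Real.sqrt (σ₁ (algebraMap (𝓞 F) F Δ₁)) / (2 * σ₁ (algebraMap (𝓞 F) F α₁)) -
        Real.sqrt (σ₁ (algebraMap (𝓞 F) F Δ₂)) / (2 * σ₁ (algebraMap (𝓞 F) F α₂))| := by
  set γ : F := algebraMap (𝓞 F) F (α₂ ^ 2 * Δ₁ - α₁ ^ 2 * Δ₂)
  have hnorm : 1 ≤ |σ₁ γ| * |σ₂ γ| := by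
    rw [← abs_mul, ← Algebra.norm_eq_mul_of_finrank_eq_two hdeg hσ]
    exact RingOfIntegers.one_le_abs_norm (sub_ne_zero.mpr hne)
  have h₁ := abs_sq_mul_sub_sq_mul_le_mul_abs_sub hα₁pos.1 hα₂pos.1
    (le_of_abs_le hα₁bd.1) (le_of_abs_le hα₂bd.1) hΔ₁pos.1.le hΔ₂pos.1.le
    (le_of_abs_le hΔ₁bd.1) (le_of_abs_le hΔ₂bd.1)
  have h₂ := abs_sq_mul_sub_sq_mul_le hα₁bd.2 hα₂bd.2 hΔ₁bd.2 hΔ₂bd.2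
  simp only [γ, map_sub, map_mul, map_pow] at hnorm
  have hA : 0 < A := hα₁pos.1.trans_le (le_of_abs_le hα₁bd.1)
  have hB : 0 < B := hΔ₁pos.1.trans_le (le_of_abs_le hΔ₁bd.1)
  have hB32 : B ^ ((3 : ℝ) / 2) = B * √B := by
    rw [Real.sqrt_eq_rpow, ← Real.rpow_one_add' hB.le (by norm_num)]
    norm_num
  rw [hB32, div_le_iff₀ (by positivity)]
  calc 1 ≤ _ := hnorm
    _ ≤ _ := mul_le_mul h₁ h₂ (abs_nonneg _) ((abs_nonneg _).trans h₁)
    _ = _ := by ring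

/-- **Quantitative separation of imaginary parts of CM points (from Lemma 3.1.5).**
Let `F` be a real quadratic field with embeddings `σ₁, σ₂`, and let `α₁, α₂, Δ₁, Δ₂` be
totally positive algebraic integers with `|σⱼ(αᵢ)| ≤ A` and `|σⱼ(Δᵢ)| ≤ B`.  If
`α₂²Δ₁ ≠ α₁²Δ₂` then `|√(σ₁Δ₁)/(2σ₁α₁) − √(σ₁Δ₂)/(2σ₁α₂)| ≥ 1/(8A⁵B^{3/2})`. -/
theorem cm_point_separation
    (F : Type*) [Field F] [NumberField F]
    (hdeg : Module.finrank ℚ F = 2)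
    (σ₁ σ₂ : F →+* ℝ) (hσ : σ₁ ≠ σ₂)
    (A B : ℝ) (hA : 1 ≤ A) (hB : 1 ≤ B)
    (α₁ α₂ Δ₁ Δ₂ : 𝓞 F)
    (hα₁pos : 0 < σ₁ (algebraMap (𝓞 F) F α₁) ∧ 0 < σ₂ (algebraMap (𝓞 F) F α₁))
    (hα₂pos : 0 < σ₁ (algebraMap (𝓞 F) F α₂) ∧ 0 < σ₂ (algebraMap (𝓞 F) F α₂))
    (hΔ₁pos : 0 < σ₁ (algebraMap (𝓞 F) F Δ₁) ∧ 0 < σ₂ (algebraMap (𝓞 F) F Δ₁))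
    (hΔ₂pos : 0 < σ₁ (algebraMap (𝓞 F) F Δ₂) ∧ 0 < σ₂ (algebraMap (𝓞 F) F Δ₂))
    (hα₁bd : |σ₁ (algebraMap (𝓞 F) F α₁)| ≤ A ∧ |σ₂ (algebraMap (𝓞 F) F α₁)| ≤ A)
    (hα₂bd : |σ₁ (algebraMap (𝓞 F) F α₂)| ≤ A ∧ |σ₂ (algebraMap (𝓞 F) F α₂)| ≤ A)
    (hΔ₁bd : |σ₁ (algebraMap (𝓞 F) F Δ₁)| ≤ B ∧ |σ₂ (algebraMap (𝓞 F) F Δ₁)| ≤ B)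
    (hΔ₂bd : |σ₁ (algebraMap (𝓞 F) F Δ₂)| ≤ B ∧ |σ₂ (algebraMap (𝓞 F) F Δ₂)| ≤ B)
    (hne : α₂ ^ 2 * Δ₁ ≠ α₁ ^ 2 * Δ₂) :
    1 / (8 * A ^ 5 * B ^ ((3 : ℝ) / 2)) ≤
      |Real.sqrt (σ₁ (algebraMap (𝓞 F) F Δ₁)) / (2 * σ₁ (algebraMap (𝓞 F) F α₁)) -
        Real.sqrt (σ₁ (algebraMap (𝓞 F) F Δ₂)) / (2 * σ₁ (algebraMap (𝓞 F) F α₂))| :=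
  cm_point_separation_general F hdeg σ₁ σ₂ hσ A B α₁ α₂ Δ₁ Δ₂ hα₁pos hα₂pos hΔ₁pos hΔ₂pos hα₁bd
    hα₂bd hΔ₁bd hΔ₂bd hne
end

section
/- Let ℓ be a prime and let Λ₀ be a finite free ℤ_ℓ-module. Let Λ₀ ⊇ Λ₁ ⊇ Λ₂ ⊇ … be a decreasing sequence of ℤ_ℓ-submodules with ⋂_{k≥0} Λ_k = 0. Suppose that for every k ≥ 1 and every β ∈ Λ_{k−1}, if ℓ·β ∈ Λ_{k+1} then β ∈ Λ_k. Then there exists k₀ ≥ 0 such that Λ_{k+1} ⊆ ℓ·Λ_k for all k ≥ k₀. -/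
/-!
Since `V / ℓV` is finite, the images of the `Λ m` in it stabilize, so eventually
`Λ m ⊆ Λ (m + 1) + ℓV`; the lifting hypothesis sharpens this to `Λ m ⊆ Λ (m + 1) + ℓΛ k` for
`k < m`, and iterating gives `Λ (k + 1) ⊆ Λ j + ℓΛ k` for every `j`. In the compact topology of
`V ≅ ℤ_ℓⁿ` all submodules are closed, so a Cantor intersection argument together with
`⋂ Λ j = 0` yields `Λ (k + 1) ⊆ ℓΛ k`.
-/

open Submodule Set
open scoped Pointwise

theorem le_sup_of_forall_le_succ_sup {α : Type*} [SemilatticeSup α] {f : ℕ → α} {c : α} {n : ℕ}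
    (h : ∀ m, n ≤ m → f m ≤ f (m + 1) ⊔ c) {m : ℕ} (hm : n ≤ m) : f n ≤ f m ⊔ c := by
  induction m, hm using Nat.le_induction with
  | base => exact le_sup_left
  | succ m hnm ih => exact ih.trans (sup_le (h m hnm) le_sup_right)

namespace Submodule

variable {R M : Type*}

theorem exists_forall_le_succ_sup [Ring R] [AddCommGroup M] [Module R M]
    (P : Submodule R M) [Finite (M ⧸ P)] {Λ : ℕ → Submodule R M} (hanti : Antitone Λ) :
    ∃ k₀, ∀ m, k₀ ≤ m → Λ m ≤ Λ (m + 1) ⊔ P := by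
  obtain ⟨k₀, hk₀⟩ := WellFoundedLT.antitone_chain_condition
    (f := fun j => (Λ j).map P.mkQ) fun _ _ h => map_mono (hanti h)
  refine ⟨k₀, fun m hm => ?_⟩
  have hmap : (Λ m).map P.mkQ = (Λ (m + 1)).map P.mkQ :=
    (hk₀ m hm).symm.trans (hk₀ (m + 1) (by omega))
  calc Λ m ≤ ((Λ m).map P.mkQ).comap P.mkQ := le_comap_map _ _
    _ = Λ (m + 1) ⊔ P := by rw [hmap, comap_map_mkQ, sup_comm]

theorem mem_of_forall_mem_sup_of_iInf_eq_bot [Ring R] [AddCommGroup M] [Module R M]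
    [TopologicalSpace M] [CompactSpace M] [ContinuousSub M]
    {N : Submodule R M} {Λ : ℕ → Submodule R M} (hN : IsClosed (N : Set M))
    (hΛ : ∀ j, IsClosed (Λ j : Set M)) (hanti : Antitone Λ) (hint : ⨅ j, Λ j = ⊥) {x : M}
    (hx : ∀ j, x ∈ Λ j ⊔ N) : x ∈ N := by
  set C : ℕ → Set M := fun j => (Λ j : Set M) ∩ (x - ·) ⁻¹' N
  have hC : ∀ j, IsClosed (C j) := fun j =>
    (hΛ j).inter (hN.preimage (continuous_const.sub continuous_id))
  obtain ⟨w, hw⟩ := IsCompact.nonempty_iInter_of_sequence_nonempty_isCompact_isClosed C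
    (fun j => inter_subset_inter_left _ (hanti j.le_succ))
    (fun j => by
      obtain ⟨y, hy, z, hz, rfl⟩ := mem_sup.1 (hx j)
      exact ⟨y, hy, by simpa using hz⟩)
    (hC 0).isCompact hC
  rw [mem_iInter] at hw
  have hw0 : w = 0 := by
    rw [← mem_bot R, ← hint, mem_iInf]
    exact fun j => (hw j).1
  simpa [hw0] using (hw 0).2

end Submodule

section Lifting

variable {R M : Type*} [CommRing R] [AddCommGroup M] [Module R M] {a : R}
  {Λ : ℕ → Submodule R M}

theorem mem_of_smul_mem_succ (htop : Λ 0 = ⊤) (hdec : ∀ k, Λ (k + 1) ≤ Λ k)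
    (hlift : ∀ k, ∀ β ∈ Λ k, a • β ∈ Λ (k + 2) → β ∈ Λ (k + 1)) :
    ∀ m u, a • u ∈ Λ (m + 1) → u ∈ Λ m
  | 0, _, _ => htop ▸ mem_top
  | m + 1, u, hu => hlift m u (mem_of_smul_mem_succ htop hdec hlift m u (hdec _ hu)) hu

theorem le_succ_sup_smul (hL : ∀ m u, a • u ∈ Λ (m + 1) → u ∈ Λ m) (hanti : Antitone Λ)
    {k m : ℕ} (hkm : k < m) (hm : Λ m ≤ Λ (m + 1) ⊔ a • ⊤) : Λ m ≤ Λ (m + 1) ⊔ a • Λ k := by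
  intro x hx
  obtain ⟨w, hw, z, hz, rfl⟩ := mem_sup.1 (hm hx)
  obtain ⟨u, -, rfl⟩ := (mem_smul_pointwise_iff_exists _ _ _).1 hz
  have hu : a • u ∈ Λ (k + 1) :=
    hanti hkm (by simpa using sub_mem hx (hanti m.le_succ hw))
  exact add_mem_sup hw ((mem_smul_pointwise_iff_exists _ _ _).2 ⟨u, hL k u hu, rfl⟩)

end Lifting

theorem PadicInt.mem_of_forall_mem_sup_of_iInf_eq_bot {p : ℕ} [Fact p.Prime] {V : Type*}
    [AddCommGroup V] [Module ℤ_[p] V] [Module.Free ℤ_[p] V] [Module.Finite ℤ_[p] V]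
    {N : Submodule ℤ_[p] V} {Λ : ℕ → Submodule ℤ_[p] V} (hanti : Antitone Λ)
    (hint : ⨅ j, Λ j = ⊥) {x : V} (hx : ∀ j, x ∈ Λ j ⊔ N) : x ∈ N := by
  let _ : TopologicalSpace V := moduleTopology ℤ_[p] V
  have : IsModuleTopology ℤ_[p] V := ⟨rfl⟩
  have := IsModuleTopology.topologicalAddGroup ℤ_[p] V
  have := Module.Finite.compactSpace ℤ_[p] V
  have : T2Space V := T2Space.of_injective_continuous
    (Module.Free.chooseBasis ℤ_[p] V).equivFun.injective
    (IsModuleTopology.continuous_of_linearMap _)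
  have hclosed (P : Submodule ℤ_[p] V) : IsClosed (P : Set V) :=
    (P.isCompact_of_fg (IsNoetherian.noetherian P)).isClosed
  exact Submodule.mem_of_forall_mem_sup_of_iInf_eq_bot (hclosed N) (fun j => hclosed _) hanti hint hx

/-- **ℓ-adic decay of a filtered family of submodules (from Theorem 4.1.1).**
Let `Λ₀ ⊇ Λ₁ ⊇ Λ₂ ⊇ …` be a decreasing chain of `ℤ_ℓ`-submodules of a finite free
`ℤ_ℓ`-module with trivial intersection, such that for every `k ≥ 1` and `β ∈ Λ_{k−1}`,
if `ℓ·β ∈ Λ_{k+1}` then `β ∈ Λ_k`.  Then `Λ_{k+1} ⊆ ℓ·Λ_k` for all large `k`. -/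
theorem ladic_decay_of_special_endomorphisms
    (ℓ : ℕ) [Fact ℓ.Prime]
    (V : Type*) [AddCommGroup V] [Module ℤ_[ℓ] V]
    [Module.Free ℤ_[ℓ] V] [Module.Finite ℤ_[ℓ] V]
    (Λ : ℕ → Submodule ℤ_[ℓ] V)
    (htop : Λ 0 = ⊤)
    (hdec : ∀ k : ℕ, Λ (k + 1) ≤ Λ k)
    (hint : ⨅ k : ℕ, Λ k = ⊥)
    (hlift : ∀ k : ℕ, ∀ β ∈ Λ k, (ℓ : ℤ_[ℓ]) • β ∈ Λ (k + 2) → β ∈ Λ (k + 1)) :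
    ∃ k₀ : ℕ, ∀ k : ℕ, k₀ ≤ k →
      ∀ x ∈ Λ (k + 1), ∃ y ∈ Λ k, x = (ℓ : ℤ_[ℓ]) • y := by
  have hanti : Antitone Λ := antitone_nat_of_succ_le hdec
  have hL := mem_of_smul_mem_succ htop hdec hlift
  have : Finite (V ⧸ (ℓ : ℤ_[ℓ]) • (⊤ : Submodule ℤ_[ℓ] V)) := by
    rw [← ideal_span_singleton_smul, ← PadicInt.maximalIdeal_eq_span_p]
    exact finite_quotient_smul _ Module.Finite.fg_top
  obtain ⟨k₀, hk₀⟩ := exists_forall_le_succ_sup ((ℓ : ℤ_[ℓ]) • ⊤) hanti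
  refine ⟨k₀, fun k hk x hx => ?_⟩
  have hx' (j : ℕ) : x ∈ Λ j ⊔ (ℓ : ℤ_[ℓ]) • Λ k := by
    have hsup := le_sup_of_forall_le_succ_sup (f := Λ)
      (fun m hm => le_succ_sup_smul hL hanti hm (hk₀ m (by omega))) (le_max_left (k + 1) j) hx
    exact sup_le_sup_right (hanti (le_max_right _ _)) _ hsup
  obtain ⟨y, hy, rfl⟩ := (mem_smul_pointwise_iff_exists _ _ _).1
    (PadicInt.mem_of_forall_mem_sup_of_iInf_eq_bot hanti hint hx')
  exact ⟨y, hy, rfl⟩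
end

section
/- Let M be a free ℤ-module of finite rank equipped with a positive definite quadratic form Q taking integer values, with associated ℤ-valued bilinear form ⟨x, y⟩ = Q(x+y) − Q(x) − Q(y). Let P ⊆ M be a submodule of rank 2 and let P' = { x ∈ M : ⟨x, p⟩ = 0 for all p ∈ P }. Let D_M denote the determinant of the Gram matrix (⟨eᵢ, eⱼ⟩) of a ℤ-basis of M, and D_P the Gram determinant of a ℤ-basis of P. Then D_M·D_P²·x ∈ P + P' for every x ∈ M. -/
/-!
Cramer's rule: if `G` is the Gram matrix of a finite family `b` and `v = (B (b i) x)ᵢ`, then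
`u = ∑ᵢ (adj G · v)ᵢ • b i` lies in the span of `b` and satisfies
`B (b j) u = det G · B (b j) x` for every `j`, so `det G • x - u` is orthogonal to that span.
Hence `D_P • x ∈ P + P'`, and so is every multiple of it.
-/

open Matrix Submodule
open LinearMap (BilinForm)

namespace LinearMap.BilinForm

variable {R M ι : Type*} [CommRing R] [AddCommGroup M] [Module R M] [Fintype ι]

def gramMatrix (B : BilinForm R M) (b : ι → M) : Matrix ι ι R :=
  Matrix.of fun i j => B (b i) (b j)

lemma apply_sum_smul_eq_gramMatrix_mulVec (B : BilinForm R M) (b : ι → M) (c : ι → R)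
    (j : ι) : B (b j) (∑ i, c i • b i) = (B.gramMatrix b *ᵥ c) j := by
  simp [gramMatrix, mulVec, dotProduct, mul_comm]

variable [DecidableEq ι]

/-- `det G` times the orthogonal projection of `x` onto the span of `b` (for invertible `G`). -/
def scaledProjection (B : BilinForm R M) (b : ι → M) (x : M) : M :=
  ∑ i, ((B.gramMatrix b).adjugate *ᵥ fun i => B (b i) x) i • b i

lemma scaledProjection_mem_span (B : BilinForm R M) (b : ι → M) (x : M) :
    B.scaledProjection b x ∈ span R (Set.range b) :=
  sum_mem fun i _ => smul_mem _ _ (subset_span (Set.mem_range_self i))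

lemma apply_scaledProjection (B : BilinForm R M) (b : ι → M) (x : M) (j : ι) :
    B (b j) (B.scaledProjection b x) = (B.gramMatrix b).det * B (b j) x := by
  rw [scaledProjection, apply_sum_smul_eq_gramMatrix_mulVec, mulVec_mulVec, mul_adjugate,
    smul_mulVec, one_mulVec, Pi.smul_apply, smul_eq_mul]

lemma det_gramMatrix_smul_sub_scaledProjection_mem_orthogonal (B : BilinForm R M) (b : ι → M)
    (x : M) : (B.gramMatrix b).det • x - B.scaledProjection b x
      ∈ B.orthogonal (span R (Set.range b)) := by
  suffices span R (Set.range b) ≤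
      LinearMap.ker (B.flip ((B.gramMatrix b).det • x - B.scaledProjection b x)) from
    fun n hn => this hn
  rw [span_le]
  rintro _ ⟨j, rfl⟩
  change B (b j) (_ - _) = 0
  rw [map_sub, map_smul, apply_scaledProjection, smul_eq_mul, sub_self]

lemma det_gramMatrix_smul_mem_span_sup_orthogonal (B : BilinForm R M) (b : ι → M) (x : M) :
    (B.gramMatrix b).det • x ∈ span R (Set.range b) ⊔ B.orthogonal (span R (Set.range b)) :=
  mem_sup.mpr ⟨_, B.scaledProjection_mem_span b x, _,
    B.det_gramMatrix_smul_sub_scaledProjection_mem_orthogonal b x, add_sub_cancel _ _⟩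

end LinearMap.BilinForm

theorem scaled_module_in_sublattice_sum_general
    (M : Type*) [AddCommGroup M] [Module ℤ M]
    (Q : QuadraticForm ℤ M)
    (P : Submodule ℤ M) (bP : Module.Basis (Fin 2) ℤ P)
    (DM DP : ℤ)
    (hDP : DP = Matrix.det (Matrix.of fun i j : Fin 2 =>
      QuadraticMap.polar (⇑Q) ((bP i : P) : M) ((bP j : P) : M))) :
    ∀ x : M, ∃ u ∈ P, ∃ w : M,
      (∀ p ∈ P, QuadraticMap.polar (⇑Q) w p = 0) ∧
      (DM * DP ^ 2) • x = u + w := by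
  intro x
  -- The statement mixes the `ℤ`-action of `Module ℤ M` with the `zsmul` of `AddCommGroup M`.
  obtain rfl : ‹Module ℤ M› = AddCommGroup.toIntModule M := Subsingleton.elim _ _
  set B : BilinForm ℤ M := Q.polarBilin
  have hDP_gram : DP = (B.gramMatrix fun i => (bP i : M)).det := hDP
  have hspan : span ℤ (Set.range fun i => (bP i : M)) = P := by
    refine (span_range_subtype_eq_top_iff P fun i => (bP i).2).mp ?_
    convert bP.span_eq
  have hmem := B.det_gramMatrix_smul_mem_span_sup_orthogonal (fun i => (bP i : M)) x
  rw [← hDP_gram, hspan] at hmem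
  obtain ⟨u, hu, w, hw, hsum⟩ := mem_sup.mp hmem
  refine ⟨(DM * DP) • u, P.smul_mem _ hu, (DM * DP) • w, fun p hp => ?_, ?_⟩
  · rw [QuadraticMap.polar_comm]
    exact (B.orthogonal P).smul_mem (DM * DP) hw p hp
  · rw [← smul_add, hsum, smul_smul, sq, mul_assoc]

/-- **The inclusion `D_M·D_P²·M ⊆ P + P'` (from Lemma 4.3.4).**
Let `M` be a free `ℤ`-module of finite rank with a positive definite integer-valued
quadratic form `Q` and associated bilinear form `⟨x, y⟩ = Q(x+y) − Q(x) − Q(y)`, let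
`P ⊆ M` be a rank-2 submodule, and let `P'` be the orthogonal complement of `P` in `M`.
If `D_M` and `D_P` are the Gram determinants of `M` and `P`, then
`D_M·D_P²·x ∈ P + P'` for every `x ∈ M`. -/
theorem scaled_module_in_sublattice_sum
    (n : ℕ) (M : Type*) [AddCommGroup M] [Module ℤ M]
    (Q : QuadraticForm ℤ M) (hQ : Q.PosDef)
    (bM : Module.Basis (Fin n) ℤ M)
    (P : Submodule ℤ M) (bP : Module.Basis (Fin 2) ℤ P)
    (DM DP : ℤ)
    (hDM : DM = Matrix.det (Matrix.of fun i j : Fin n =>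
      QuadraticMap.polar (⇑Q) (bM i) (bM j)))
    (hDP : DP = Matrix.det (Matrix.of fun i j : Fin 2 =>
      QuadraticMap.polar (⇑Q) ((bP i : P) : M) ((bP j : P) : M))) :
    ∀ x : M, ∃ u ∈ P, ∃ w : M,
      (∀ p ∈ P, QuadraticMap.polar (⇑Q) w p = 0) ∧
      (DM * DP ^ 2) • x = u + w :=
  scaled_module_in_sublattice_sum_general M Q P bP DM DP hDP
end

section
/- Let M be a free ℤ-module of finite rank equipped with a positive definite quadratic form Q taking integer values, with associated ℤ-valued bilinear form ⟨x, y⟩ = Q(x+y) − Q(x) − Q(y). Let P ⊆ M be a saturated submodule of rank 2 (i.e., P = M ∩ (P ⊗ ℚ) inside M ⊗ ℚ), let D_M be the Gram determinant of M and D_P the Gram determinant of P, and set C = D_M·D_P². Let ℓ be a prime and k, N positive integers with ℓ^{2k} > C²·N. Then every element v ∈ M of the form v = u + ℓᵏ·w with u ∈ P and w ∈ M that satisfies Q(v) ≤ N lies in P. -/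
/-!
Let `G` be the Gram matrix of a basis `e` of `P` and `D = det G`. The map
`X z = D • z - ∑ᵢ (adj G *ᵥ (polar (e j) z)ⱼ)ᵢ • eᵢ` is `D` times the orthogonal projection onto
`P^⊥`, written without denominators. It is `ℤ`-linear, kills `P`, and by Pythagoras
`Q (X z) ≤ D² Q z`. For `v = u + ℓᵏ • w` this gives `X v = ℓᵏ • X w`. If `X w ≠ 0`, then
`ℓ^{2k} ≤ Q (X v) ≤ D² N ≤ C² N`, which is impossible; so `X v = 0`, i.e. `D • v ∈ P`, and
saturation gives `v ∈ P`.
-/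

open Matrix Submodule Set QuadraticMap

namespace QuadraticForm

variable {ι R M : Type*} [Fintype ι] [CommRing R] [AddCommGroup M] [Module R M]

def gramMatrix (Q : QuadraticForm R M) (e : ι → M) : Matrix ι ι R :=
  Matrix.of fun i j => polar Q (e i) (e j)

variable (Q : QuadraticForm R M) (e : ι → M)

theorem polar_sum_smul_sum_smul (c d : ι → R) :
    polar Q (∑ i, c i • e i) (∑ j, d j • e j) = c ⬝ᵥ (Q.gramMatrix e *ᵥ d) := by
  simp only [← polarBilin_apply_apply, map_sum, map_smul, LinearMap.coe_sum, LinearMap.coe_smul,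
    Finset.sum_apply, Pi.smul_apply, smul_eq_mul, Finset.mul_sum, dotProduct, mulVec, gramMatrix,
    of_apply]
  exact Finset.sum_comm.trans
    (Finset.sum_congr rfl fun i _ => Finset.sum_congr rfl fun j _ => by ring)

theorem det_gramMatrix_ne_zero [LinearOrder R] [IsStrictOrderedRing R] [DecidableEq ι]
    (hQ : Q.PosDef) (he : LinearIndependent R e) : (Q.gramMatrix e).det ≠ 0 := by
  intro h
  obtain ⟨c, hc, hGc⟩ := exists_mulVec_eq_zero_iff.2 h
  have hx : ∑ i, c i • e i ≠ 0 := fun h0 => hc (funext (Fintype.linearIndependent_iff.1 he c h0))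
  have hpolar := Q.polar_sum_smul_sum_smul e c c
  rw [hGc, dotProduct_zero, polar_self, two_smul] at hpolar
  linarith [hQ _ hx]

variable [DecidableEq ι]

/-- `det G` times the orthogonal projection onto the orthogonal complement of `span (range e)`,
where `G` is the Gram matrix of `e`; the adjugate stands in for `det G • G⁻¹`. -/
noncomputable def scaledOrthProj : M →ₗ[R] M :=
  (Q.gramMatrix e).det • LinearMap.id - Fintype.linearCombination R e ∘ₗ
    (Q.gramMatrix e).adjugate.mulVecLin ∘ₗ LinearMap.pi fun i => Q.polarBilin (e i)

theorem scaledOrthProj_apply (z : M) : Q.scaledOrthProj e z = (Q.gramMatrix e).det • z -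
    ∑ i, ((Q.gramMatrix e).adjugate *ᵥ fun j => polar Q (e j) z) i • e i := by
  simp only [scaledOrthProj, LinearMap.sub_apply, LinearMap.smul_apply, LinearMap.id_apply,
    LinearMap.comp_apply, mulVecLin_apply, Fintype.linearCombination_apply]
  rfl

theorem scaledOrthProj_apply_self (k : ι) : Q.scaledOrthProj e (e k) = 0 := by
  have hcol : ((Q.gramMatrix e).adjugate *ᵥ fun j => polar Q (e j) (e k)) =
      (Q.gramMatrix e).det • Pi.single k 1 := by
    ext i
    simpa [mulVec, dotProduct, mul_apply, Pi.single_apply, one_apply, eq_comm, gramMatrix] using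
      congr_arg (fun A => A i k) (adjugate_mul (Q.gramMatrix e))
  rw [scaledOrthProj_apply, hcol]
  simp [Pi.single_apply]

theorem polar_scaledOrthProj (j : ι) (z : M) : polar Q (e j) (Q.scaledOrthProj e z) = 0 := by
  set b : ι → R := fun i => polar Q (e i) z
  have hGc : Q.gramMatrix e *ᵥ ((Q.gramMatrix e).adjugate *ᵥ b) = (Q.gramMatrix e).det • b := by
    rw [mulVec_mulVec, mul_adjugate, smul_mulVec, one_mulVec]
  rw [scaledOrthProj_apply, ← polarBilin_apply_apply, map_sub, map_smul, map_sum, sub_eq_zero]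
  change ((Q.gramMatrix e).det • b) j = _
  rw [← hGc]
  exact Finset.sum_congr rfl fun i _ => by rw [map_smul, smul_eq_mul, mul_comm]; rfl

theorem scaledOrthProj_eq_zero_of_mem_span {x : M} (hx : x ∈ span R (range e)) :
    Q.scaledOrthProj e x = 0 :=
  LinearMap.mem_ker.1 (span_le.2 (range_subset_iff.2 (Q.scaledOrthProj_apply_self e)) hx)

theorem polar_scaledOrthProj_of_mem_span {x : M} (hx : x ∈ span R (range e)) (z : M) :
    polar Q x (Q.scaledOrthProj e z) = 0 := by
  have : span R (range e) ≤ LinearMap.ker (Q.polarBilin.flip (Q.scaledOrthProj e z)) :=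
    span_le.2 (range_subset_iff.2 fun j => Q.polar_scaledOrthProj e j z)
  exact this hx

theorem smul_sub_scaledOrthProj_mem_span (z : M) :
    (Q.gramMatrix e).det • z - Q.scaledOrthProj e z ∈ span R (range e) := by
  rw [scaledOrthProj_apply, sub_sub_cancel]
  exact sum_mem fun i _ => smul_mem _ _ (subset_span (mem_range_self i))

theorem apply_scaledOrthProj_le [PartialOrder R] [IsOrderedAddMonoid R] (hQ : ∀ x, 0 ≤ Q x)
    (z : M) : Q (Q.scaledOrthProj e z) ≤ (Q.gramMatrix e).det ^ 2 * Q z := by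
  set y := Q.scaledOrthProj e z
  set p := (Q.gramMatrix e).det • z - y
  have horth : polar Q y p = 0 := by
    rw [polar_comm]
    exact Q.polar_scaledOrthProj_of_mem_span e (Q.smul_sub_scaledOrthProj_mem_span e z) z
  rw [polar, sub_sub, sub_eq_zero, add_sub_cancel] at horth
  calc Q y ≤ Q y + Q p := le_add_of_nonneg_right (hQ p)
    _ = (Q.gramMatrix e).det ^ 2 * Q z := by rw [← horth, Q.map_smul, smul_eq_mul, pow_two]

end QuadraticForm

/- The `ℤ`-module structure on `P` is arbitrary here; it agrees with `P.module` because
`ℤ`-module structures are unique. -/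

theorem Module.Basis.span_range_coe_int {ι M : Type*} [AddCommGroup M] [Module ℤ M]
    {P : Submodule ℤ M} [instP : Module ℤ P] (b : Basis ι ℤ P) :
    span ℤ (range fun i => (b i : M)) = P := by
  obtain rfl : instP = P.module := Subsingleton.elim _ _
  let _ : Module ℤ P := P.module
  have := congrArg (map P.subtype) b.span_eq
  rwa [map_span, Submodule.map_top, range_subtype, ← range_comp] at this

theorem Module.Basis.linearIndependent_coe_int {ι M : Type*} [AddCommGroup M] [Module ℤ M]
    {P : Submodule ℤ M} [instP : Module ℤ P] (b : Basis ι ℤ P) :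
    LinearIndependent ℤ fun i => (b i : M) := by
  obtain rfl : instP = P.module := Subsingleton.elim _ _
  let _ : Module ℤ P := P.module
  exact b.linearIndependent.map' P.subtype P.ker_subtype

theorem short_vectors_in_sublattice_general
    (n : ℕ) (M : Type*) [AddCommGroup M] [Module ℤ M]
    (Q : QuadraticForm ℤ M) (hQ : Q.PosDef)
    (bM : Module.Basis (Fin n) ℤ M)
    (P : Submodule ℤ M) (bP : Module.Basis (Fin 2) ℤ P)
    (hsat : ∀ (c : ℤ) (x : M), c ≠ 0 → c • x ∈ P → x ∈ P)
    (DM DP C : ℤ)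
    (hDM : DM = Matrix.det (Matrix.of fun i j : Fin n =>
      QuadraticMap.polar (⇑Q) (bM i) (bM j)))
    (hDP : DP = Matrix.det (Matrix.of fun i j : Fin 2 =>
      QuadraticMap.polar (⇑Q) ((bP i : P) : M) ((bP j : P) : M)))
    (hC : C = DM * DP ^ 2)
    (ℓ : ℕ) (k N : ℕ)
    (hbig : (C : ℤ) ^ 2 * N < (ℓ : ℤ) ^ (2 * k)) :
    ∀ v u w : M, u ∈ P → v = u + ((ℓ : ℤ) ^ k) • w → Q v ≤ N → v ∈ P := by
  obtain rfl : ‹Module ℤ M› = AddCommGroup.toIntModule M := Subsingleton.elim _ _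
  intro v u w hu hv hQv
  set e : Fin 2 → M := fun i => (bP i : M)
  set X := Q.scaledOrthProj e
  replace hDP : DP = (Q.gramMatrix e).det := hDP
  have hspan : span ℤ (range e) = P := bP.span_range_coe_int
  have hDM0 : DM ≠ 0 := hDM ▸ Q.det_gramMatrix_ne_zero bM hQ bM.linearIndependent
  have hDP0 : DP ≠ 0 := hDP ▸ Q.det_gramMatrix_ne_zero e hQ bP.linearIndependent_coe_int
  have hXv : X v = ((ℓ : ℤ) ^ k) • X w := by
    rw [hv, map_add, map_zsmul, Q.scaledOrthProj_eq_zero_of_mem_span e (hspan ▸ hu), zero_add]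
  by_cases hXw : X w = 0
  · have hDPv := Q.smul_sub_scaledOrthProj_mem_span e v
    rw [hXv, hXw, smul_zero, sub_zero, hspan, ← hDP] at hDPv
    exact hsat DP v hDP0 hDPv
  have hlower : (ℓ : ℤ) ^ (2 * k) ≤ Q (X v) := by
    rw [hXv, Q.map_smul, smul_eq_mul, two_mul, pow_add]
    exact le_mul_of_one_le_right (mul_self_nonneg _) (hQ _ hXw)
  have hupper : Q (X v) ≤ DP ^ 2 * N :=
    (hDP ▸ Q.apply_scaledOrthProj_le e hQ.nonneg v).trans
      (mul_le_mul_of_nonneg_left hQv (sq_nonneg _))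
  have hDPC : DP ^ 2 ≤ C ^ 2 := by
    have hpos : 0 < (DM * DP) ^ 2 := by positivity
    calc DP ^ 2 ≤ (DM * DP) ^ 2 * DP ^ 2 := le_mul_of_one_le_left (sq_nonneg _) hpos
      _ = C ^ 2 := by rw [hC]; ring
  linarith [mul_le_mul_of_nonneg_right hDPC (Int.natCast_nonneg N)]

/-- **Short vectors lie in the distinguished rank-2 sublattice (Lemma 4.3.4).**
Let `M` be a free `ℤ`-module of finite rank with a positive definite integer-valued
quadratic form `Q`, let `P ⊆ M` be a saturated rank-2 submodule, and set
`C = D_M·D_P²` with `D_M, D_P` the Gram determinants of `M` and `P`.  If `ℓ` is a prime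
and `k, N` are positive integers with `ℓ^{2k} > C²·N`, then every `v = u + ℓᵏ·w`
(`u ∈ P`, `w ∈ M`) with `Q(v) ≤ N` lies in `P`. -/
theorem short_vectors_in_sublattice
    (n : ℕ) (M : Type*) [AddCommGroup M] [Module ℤ M]
    (Q : QuadraticForm ℤ M) (hQ : Q.PosDef)
    (bM : Module.Basis (Fin n) ℤ M)
    (P : Submodule ℤ M) (bP : Module.Basis (Fin 2) ℤ P)
    (hsat : ∀ (c : ℤ) (x : M), c ≠ 0 → c • x ∈ P → x ∈ P)
    (DM DP C : ℤ)
    (hDM : DM = Matrix.det (Matrix.of fun i j : Fin n =>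
      QuadraticMap.polar (⇑Q) (bM i) (bM j)))
    (hDP : DP = Matrix.det (Matrix.of fun i j : Fin 2 =>
      QuadraticMap.polar (⇑Q) ((bP i : P) : M) ((bP j : P) : M)))
    (hC : C = DM * DP ^ 2)
    (ℓ : ℕ) (hℓ : ℓ.Prime) (k N : ℕ) (hk : 0 < k) (hN : 0 < N)
    (hbig : (C : ℤ) ^ 2 * N < (ℓ : ℤ) ^ (2 * k)) :
    ∀ v u w : M, u ∈ P → v = u + ((ℓ : ℤ) ^ k) • w → Q v ≤ N → v ∈ P :=
  short_vectors_in_sublattice_general n M Q hQ bM P bP hsat DM DP C hDM hDP hC ℓ k N hbig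
end
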